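/- Let f₁, …, f_n : ℝ^d → ℝ be differentiable, convex, and each L-smooth, f(x) = (1/n)∑_{j=1}^n f_j(x), and fix x, x̃ ∈ ℝ^d. For each worker i = 1,…,N let u_i = (1/B)∑_{a∈I_i}[∇f_a(x) − ∇f_a(x̃)], where the mini-batches I_i consist of B indices sampled uniformly and independently (with replacement, and independently across workers) from {1,…,n}. Let Y_1,…,Y_N be random vectors such that for each i, E[‖Y_i − u_i‖² | I_1,…,I_N] ≤ κ·‖u_i‖², where κ = d·λ²/(4(2^{b−1}−1)²) + d_λ(1−λ)² for some λ ∈ (0,1], integer b ≥ 2 and integer 0 ≤ d_λ ≤ d. Set v = (1/N)∑_{i=1}^N Y_i + ∇f(x̃). Then E‖v − ∇f(x)‖² ≤ 4L·[d·λ²/(4(2^{b−1}−1)²) + d_λ(1−λ)² + 1/(NB)]·[f(x̃) − f(x) − ⟨∇f(x), x̃ − x⟩]. -/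

import Mathlib

/-!
Write `v - ∇f(x)` as the quantization error `(1/N) ∑ (Y_i - u_i)` plus the sampling error
`(1/N) ∑ u_i - (∇f(x) - ∇f(x̃))`, and use `‖a + b‖² ≤ 2‖a‖² + 2‖b‖²`. With
`ζ_k = ∇f_k(x) - ∇f_k(x̃)`, the sampling error is the mean of `NB` independent copies of
`ζ_I - E ζ_I`, `I` uniform, so its second moment is at most `E‖ζ_I‖² / (NB)`; integrating the
conditional bound, the quantization error has second moment at most `κ E‖u_i‖² ≤ κ E‖ζ_I‖²`.
Finally `E‖ζ_I‖² = (1/n) ∑ ‖ζ_k‖² ≤ 2L D_f(x̃, x)` by co-coercivity of the gradients of the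
convex `L`-smooth `f_k`: `‖∇f_k(x̃) - ∇f_k(x)‖² ≤ 2L D_{f_k}(x̃, x)`.
-/

open MeasureTheory ProbabilityTheory
open scoped ProbabilityTheory BigOperators ENNReal RealInnerProductSpace

section ConvexAnalysis

variable {F : Type*} [NormedAddCommGroup F] [InnerProductSpace ℝ F] [CompleteSpace F]
  {f : F → ℝ} {g : F → F} {L : ℝ}

theorem HasGradientAt.hasDerivAt_comp_add_smul {v x h : F} {t : ℝ}
    (hf : HasGradientAt f v (x + t • h)) :
    HasDerivAt (fun s : ℝ => f (x + s • h)) ⟪v, h⟫ t := by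
  have hline : HasDerivAt (fun s : ℝ => x + s • h) h t := by
    simpa using ((hasDerivAt_id t).smul_const h).const_add x
  simpa [InnerProductSpace.toDual_apply_apply, Function.comp_def] using
    hf.hasFDerivAt.comp_hasDerivAt t hline

theorem ConvexOn.add_inner_le_of_hasGradientAt (hc : ConvexOn ℝ Set.univ f) {x v : F}
    (hf : HasGradientAt f v x) (y : F) : f x + ⟪v, y - x⟫ ≤ f y := by
  have hderiv : HasDerivAt (fun t : ℝ => f (x + t • (y - x))) ⟪v, y - x⟫ 0 :=
    HasGradientAt.hasDerivAt_comp_add_smul (by simpa using hf)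
  have hline : ConvexOn ℝ Set.univ (fun t : ℝ => f (x + t • (y - x))) := by
    have hcomp : (fun t : ℝ => f (x + t • (y - x))) = f ∘ AffineMap.lineMap x y := by
      funext t; simp [AffineMap.lineMap_apply, add_comm]
    simpa [hcomp] using hc.comp_affineMap (AffineMap.lineMap x y)
  have := hline.le_slope_of_hasDerivAt (Set.mem_univ 0) (Set.mem_univ 1) one_pos hderiv
  simp only [slope_def_field, zero_smul, add_zero, one_smul, sub_zero, div_one,
    add_sub_cancel] at this
  linarith

theorem le_add_inner_add_of_lipschitz_gradient (hf : ∀ z, HasGradientAt f (g z) z)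
    (hL : ∀ a b, ‖g a - g b‖ ≤ L * ‖a - b‖) (x y : F) :
    f y ≤ f x + ⟪g x, y - x⟫ + L / 2 * ‖y - x‖ ^ 2 := by
  set h := y - x
  let ψ : ℝ → ℝ := fun t => f (x + t • h) - t * ⟪g x, h⟫ - L / 2 * t ^ 2 * ‖h‖ ^ 2
  have hψ : ∀ t, HasDerivAt ψ (⟪g (x + t • h), h⟫ - ⟪g x, h⟫ - L * t * ‖h‖ ^ 2) t := by
    intro t
    have := (((hf (x + t • h)).hasDerivAt_comp_add_smul).sub
      ((hasDerivAt_id t).mul_const ⟪g x, h⟫)).sub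
      (((hasDerivAt_pow 2 t).const_mul (L / 2)).mul_const (‖h‖ ^ 2))
    exact this.congr_deriv (by norm_num; exact .inl (by ring))
  have hanti : AntitoneOn ψ (Set.Icc 0 1) := by
    refine antitoneOn_of_hasDerivWithinAt_nonpos (convex_Icc 0 1)
      (fun t _ => (hψ t).continuousAt.continuousWithinAt)
      (fun t _ => (hψ t).hasDerivWithinAt) fun t ht => ?_
    rw [interior_Icc] at ht
    have hlip : ‖g (x + t • h) - g x‖ ≤ L * (t * ‖h‖) := by
      simpa [norm_smul, abs_of_pos ht.1] using hL (x + t • h) x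
    have := real_inner_le_norm (g (x + t • h) - g x) h
    rw [inner_sub_left] at this
    nlinarith [mul_le_mul_of_nonneg_right hlip (norm_nonneg h)]
  have := hanti (by simp) (by simp) zero_le_one
  simp only [ψ, zero_smul, one_smul, add_zero, zero_mul, sub_zero, one_mul, one_pow, h,
    add_sub_cancel] at this
  norm_num at this
  linarith

theorem ConvexOn.norm_gradient_sub_sq_le (hc : ConvexOn ℝ Set.univ f)
    (hf : ∀ z, HasGradientAt f (g z) z) (hL : ∀ a b, ‖g a - g b‖ ≤ L * ‖a - b‖) (x y : F) :
    ‖g y - g x‖ ^ 2 ≤ 2 * L * (f y - f x - ⟪g x, y - x⟫) := by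
  by_cases hxy : y = x
  · simp [hxy]
  have hL0 : 0 ≤ L := nonneg_of_mul_nonneg_left ((norm_nonneg _).trans (hL y x))
    (norm_pos_iff.2 (sub_ne_zero.2 hxy))
  rcases hL0.eq_or_lt with rfl | hLpos
  · simpa using hL y x
  -- `f - ⟪g x, ·⟫` is minimal at `x`; one gradient step from `y` lowers it by `‖g y - g x‖² / 2L`
  let φ : F → ℝ := fun z => f z - ⟪g x, z⟫
  have hφ : ∀ z, HasGradientAt φ (g z - g x) z := by
    intro z
    rw [hasGradientAt_iff_hasFDerivAt, map_sub]
    exact (hf z).hasFDerivAt.sub (InnerProductSpace.toDual ℝ F (g x)).hasFDerivAt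
  have hφL : ∀ a b, ‖(g a - g x) - (g b - g x)‖ ≤ L * ‖a - b‖ := by
    simpa using hL
  set z := y - L⁻¹ • (g y - g x)
  have hmin : φ x ≤ φ z := by
    have := hc.add_inner_le_of_hasGradientAt (hf x) z
    simp only [φ, inner_sub_right] at this ⊢
    linarith
  have hstep := le_add_inner_add_of_lipschitz_gradient hφ hφL y z
  have hzy : z - y = -(L⁻¹ • (g y - g x)) := by simp [z]
  rw [hzy, inner_neg_right, real_inner_smul_right, real_inner_self_eq_norm_sq, norm_neg,
    norm_smul, mul_pow, Real.norm_eq_abs, sq_abs] at hstep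
  simp only [φ, inner_sub_right] at hmin hstep ⊢
  have key : L⁻¹ * ‖g y - g x‖ ^ 2 - L / 2 * (L⁻¹ ^ 2 * ‖g y - g x‖ ^ 2)
      = ‖g y - g x‖ ^ 2 / (2 * L) := by
    field_simp; ring
  have : ‖g y - g x‖ ^ 2 / (2 * L) ≤ f y - f x - (⟪g x, y⟫ - ⟪g x, x⟫) := by linarith
  rwa [div_le_iff₀ (by positivity), mul_comm] at this

end ConvexAnalysis

section AverageGradient

variable {F : Type*} [NormedAddCommGroup F] [InnerProductSpace ℝ F] [CompleteSpace F]
  {ι : Type*} [Fintype ι] {f : ι → F → ℝ} {g : ι → F → F}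

theorem hasGradientAt_const_mul_sum {x : F} (hf : ∀ j, HasGradientAt (f j) (g j x) x) (c : ℝ) :
    HasGradientAt (fun y => c * ∑ j, f j y) (c • ∑ j, g j x) x := by
  rw [hasGradientAt_iff_hasFDerivAt, map_smul, map_sum]
  exact (HasFDerivAt.fun_sum fun j _ => (hf j).hasFDerivAt).const_mul c

theorem mean_norm_gradient_sub_sq_le (hc : ∀ j, ConvexOn ℝ Set.univ (f j))
    (hf : ∀ j z, HasGradientAt (f j) (g j z) z) {L : ℝ}
    (hL : ∀ j a b, ‖g j a - g j b‖ ≤ L * ‖a - b‖) (x y : F) :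
    (Fintype.card ι : ℝ)⁻¹ * ∑ j, ‖g j x - g j y‖ ^ 2 ≤
      2 * L * ((Fintype.card ι : ℝ)⁻¹ * ∑ j, f j y - (Fintype.card ι : ℝ)⁻¹ * ∑ j, f j x -
        ⟪(Fintype.card ι : ℝ)⁻¹ • ∑ j, g j x, y - x⟫) := by
  have hbregman : ∀ j, ‖g j x - g j y‖ ^ 2 ≤ 2 * L * (f j y - f j x - ⟪g j x, y - x⟫) :=
    fun j => norm_sub_rev (g j x) _ ▸ (hc j).norm_gradient_sub_sq_le (hf j) (hL j) x y
  calc _ ≤ (Fintype.card ι : ℝ)⁻¹ * ∑ j, 2 * L * (f j y - f j x - ⟪g j x, y - x⟫) := by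
        gcongr with j; exact hbregman j
    _ = _ := by
        simp only [← Finset.mul_sum, Finset.sum_sub_distrib, real_inner_smul_left, sum_inner]
        ring

end AverageGradient

theorem norm_add_sq_le_two_mul_add {G : Type*} [SeminormedAddCommGroup G] (a b : G) :
    ‖a + b‖ ^ 2 ≤ 2 * ‖a‖ ^ 2 + 2 * ‖b‖ ^ 2 := by
  nlinarith [norm_add_le a b, norm_nonneg (a + b), sq_nonneg (‖a‖ - ‖b‖)]

theorem norm_inv_card_smul_sum_sq_le {E ι : Type*} [SeminormedAddCommGroup E] [NormedSpace ℝ E]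
    [Fintype ι] (v : ι → E) :
    ‖(Fintype.card ι : ℝ)⁻¹ • ∑ i, v i‖ ^ 2 ≤ (Fintype.card ι : ℝ)⁻¹ * ∑ i, ‖v i‖ ^ 2 := by
  have hsum : ‖∑ i, v i‖ ^ 2 ≤ Fintype.card ι * ∑ i, ‖v i‖ ^ 2 :=
    (pow_le_pow_left₀ (norm_nonneg _) (norm_sum_le _ _) 2).trans
      (by simpa using sq_sum_le_card_mul_sum_sq (s := Finset.univ) (f := fun i => ‖v i‖))
  rcases (Nat.cast_nonneg (α := ℝ) (Fintype.card ι)).eq_or_lt with hc | hc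
  · simp [← hc]
  rw [norm_smul, mul_pow, Real.norm_eq_abs, sq_abs]
  calc (Fintype.card ι : ℝ)⁻¹ ^ 2 * ‖∑ i, v i‖ ^ 2
      ≤ (Fintype.card ι : ℝ)⁻¹ ^ 2 * (Fintype.card ι * ∑ i, ‖v i‖ ^ 2) := by gcongr
    _ = _ := by field_simp

theorem norm_inv_card_smul_sum_sub_sq_le {E ι : Type*} [SeminormedAddCommGroup E]
    [NormedSpace ℝ E] [Fintype ι] (y u : ι → E) (c : E) :
    ‖(Fintype.card ι : ℝ)⁻¹ • ∑ i, y i - c‖ ^ 2 ≤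
      2 * ((Fintype.card ι : ℝ)⁻¹ * ∑ i, ‖y i - u i‖ ^ 2) +
        2 * ‖(Fintype.card ι : ℝ)⁻¹ • ∑ i, u i - c‖ ^ 2 := by
  have hsplit : (Fintype.card ι : ℝ)⁻¹ • ∑ i, y i - c =
      (Fintype.card ι : ℝ)⁻¹ • ∑ i, (y i - u i) + ((Fintype.card ι : ℝ)⁻¹ • ∑ i, u i - c) := by
    rw [Finset.sum_sub_distrib, smul_sub]
    abel
  rw [hsplit]
  refine (norm_add_sq_le_two_mul_add _ _).trans ?_
  gcongr
  exact norm_inv_card_smul_sum_sq_le _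

section Probability

variable {Ω : Type*} {mΩ : MeasurableSpace Ω} {μ : Measure Ω}

theorem integral_le_integral_of_condExp_le {m : MeasurableSpace Ω} (hm : m ≤ mΩ)
    [SigmaFinite (μ.trim hm)] {f g : Ω → ℝ} (hg : Integrable g μ) (hfg : μ[f | m] ≤ᵐ[μ] g) :
    ∫ ω, f ω ∂μ ≤ ∫ ω, g ω ∂μ :=
  integral_condExp (μ := μ) (f := f) hm ▸ integral_mono_ae integrable_condExp hg hfg

theorem integral_comp_of_uniform [IsFiniteMeasure μ] {E : Type*} [NormedAddCommGroup E]
    [NormedSpace ℝ E] [CompleteSpace E] {α : Type*} [Fintype α] [MeasurableSpace α]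
    [DiscreteMeasurableSpace α] {J : Ω → α} (hJ : Measurable J)
    (hunif : ∀ k, μ {ω | J ω = k} = (Fintype.card α : ℝ≥0∞)⁻¹) (φ : α → E) :
    ∫ ω, φ (J ω) ∂μ = (Fintype.card α : ℝ)⁻¹ • ∑ k, φ k := by
  rw [← integral_map hJ.aemeasurable .of_discrete, integral_fintype .of_finite, Finset.smul_sum]
  refine Finset.sum_congr rfl fun k _ => ?_
  rw [measureReal_def, Measure.map_apply hJ (.singleton k)]
  simp [Set.preimage, hunif]

section InnerProductSpace

variable {E : Type*} [NormedAddCommGroup E] [InnerProductSpace ℝ E] [CompleteSpace E]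

theorem integral_norm_sub_integral_sq_le [IsProbabilityMeasure μ] {Z : Ω → E}
    (hZ : MemLp Z 2 μ) : ∫ ω, ‖Z ω - μ[Z]‖ ^ 2 ∂μ ≤ ∫ ω, ‖Z ω‖ ^ 2 ∂μ := by
  have hZ1 : Integrable Z μ := hZ.integrable one_le_two
  have hZ2 : Integrable (fun ω => ‖Z ω‖ ^ 2) μ := (memLp_two_iff_integrable_sq_norm hZ.1).1 hZ
  have hinner : Integrable (fun ω => 2 * ⟪μ[Z], Z ω⟫) μ := (hZ1.const_inner _).const_mul 2
  have hdiff : Integrable (fun ω => ‖Z ω‖ ^ 2 - 2 * ⟪μ[Z], Z ω⟫) μ := hZ2.sub hinner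
  simp_rw [norm_sub_sq_real, real_inner_comm (μ[Z])]
  rw [integral_add hdiff (integrable_const _), integral_sub hZ2 hinner,
    integral_const_mul, integral_inner hZ1, real_inner_self_eq_norm_sq]
  simp only [probReal_univ, one_smul, integral_const]
  nlinarith [sq_nonneg ‖μ[Z]‖]

theorem integral_norm_sum_sq_of_pairwise_indepFun [IsFiniteMeasure μ] [MeasurableSpace E]
    [BorelSpace E] {ι : Type*} [Fintype ι] {X : ι → Ω → E} (hX : ∀ i, MemLp (X i) 2 μ)
    (hindep : Pairwise fun i j => IndepFun (X i) (X j) μ) (hmean : ∀ i, μ[X i] = 0) :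
    ∫ ω, ‖∑ i, X i ω‖ ^ 2 ∂μ = ∑ i, ∫ ω, ‖X i ω‖ ^ 2 ∂μ := by
  classical
  have hcross : ∀ i j, i ≠ j → ∫ ω, ⟪X i ω, X j ω⟫ ∂μ = 0 := fun i j hij => by
    have := (hindep hij).integral_bilin ((hX i).integrable one_le_two)
      ((hX j).integrable one_le_two) (innerSL ℝ)
    rwa [hmean, hmean, map_zero] at this
  have hint : ∀ i j, Integrable (fun ω => ⟪X i ω, X j ω⟫) μ := fun i j => by
    by_cases hij : i = j
    · subst hij
      simpa using (memLp_two_iff_integrable_sq_norm (hX i).1).1 (hX i)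
    · exact (hindep hij).integrable_bilin ((hX i).integrable one_le_two)
        ((hX j).integrable one_le_two) (innerSL ℝ)
  simp_rw [← real_inner_self_eq_norm_sq, sum_inner, inner_sum]
  rw [integral_finsetSum _ fun i _ => integrable_finsetSum _ fun j _ => hint i j]
  refine Finset.sum_congr rfl fun i _ => ?_
  rw [integral_finsetSum _ fun j _ => hint i j,
    Finset.sum_eq_single i (fun j _ hji => hcross i j hji.symm) (by simp)]

end InnerProductSpace

section Sampling

variable [IsProbabilityMeasure μ] {α : Type*} [Fintype α] [MeasurableSpace α]
  [DiscreteMeasurableSpace α] {ι : Type*} [Fintype ι] [Nonempty ι] {J : ι → Ω → α}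

theorem integral_norm_sq_sampleMean_le {E : Type*} [NormedAddCommGroup E] [NormedSpace ℝ E]
    (ζ : α → E) (hJ : ∀ p, Measurable (J p))
    (hunif : ∀ p k, μ {ω | J p ω = k} = (Fintype.card α : ℝ≥0∞)⁻¹) :
    ∫ ω, ‖(Fintype.card ι : ℝ)⁻¹ • ∑ p, ζ (J p ω)‖ ^ 2 ∂μ ≤
      (Fintype.card α : ℝ)⁻¹ * ∑ k, ‖ζ k‖ ^ 2 := by
  have hint : ∀ p, Integrable (fun ω => ‖ζ (J p ω)‖ ^ 2) μ := fun p =>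
    (Integrable.of_finite (f := fun k => ‖ζ k‖ ^ 2)).comp_measurable (hJ p)
  calc ∫ ω, ‖(Fintype.card ι : ℝ)⁻¹ • ∑ p, ζ (J p ω)‖ ^ 2 ∂μ
      ≤ ∫ ω, (Fintype.card ι : ℝ)⁻¹ * ∑ p, ‖ζ (J p ω)‖ ^ 2 ∂μ :=
        integral_mono_of_nonneg (.of_forall fun _ => by positivity)
          ((integrable_finsetSum _ fun p _ => hint p).const_mul _)
          (.of_forall fun ω => norm_inv_card_smul_sum_sq_le _)
    _ = (Fintype.card α : ℝ)⁻¹ * ∑ k, ‖ζ k‖ ^ 2 := by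
        rw [integral_const_mul, integral_finsetSum _ fun p _ => hint p]
        simp_rw [integral_comp_of_uniform (hJ _) (hunif _) (fun k => ‖ζ k‖ ^ 2)]
        simp [Finset.card_univ]

theorem integral_norm_sq_sampleMean_sub_mean_le {E : Type*} [NormedAddCommGroup E]
    [InnerProductSpace ℝ E] [CompleteSpace E] [MeasurableSpace E] [BorelSpace E] (ζ : α → E)
    (hJ : ∀ p, Measurable (J p)) (hindep : iIndepFun J μ)
    (hunif : ∀ p k, μ {ω | J p ω = k} = (Fintype.card α : ℝ≥0∞)⁻¹) :
    ∫ ω, ‖(Fintype.card ι : ℝ)⁻¹ • ∑ p, ζ (J p ω) - (Fintype.card α : ℝ)⁻¹ • ∑ k, ζ k‖ ^ 2 ∂μ ≤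
      (Fintype.card ι : ℝ)⁻¹ * ((Fintype.card α : ℝ)⁻¹ * ∑ k, ‖ζ k‖ ^ 2) := by
  set m := (Fintype.card α : ℝ)⁻¹ • ∑ k, ζ k
  have hmean : ∀ p, μ[fun ω => ζ (J p ω)] = m := fun p =>
    integral_comp_of_uniform (hJ p) (hunif p) ζ
  have hL2 : ∀ p, MemLp (fun ω => ζ (J p ω)) 2 μ := fun p =>
    (MemLp.of_discrete (f := ζ)).comp_of_map (hJ p).aemeasurable
  have hL2c : ∀ p, MemLp (fun ω => ζ (J p ω) - m) 2 μ := fun p => (hL2 p).sub (memLp_const m)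
  have hcentred : ∀ p, μ[fun ω => ζ (J p ω) - m] = 0 := fun p => by
    rw [integral_sub ((hL2 p).integrable one_le_two) (integrable_const m), hmean p]
    simp
  have hvar : ∀ p, ∫ ω, ‖ζ (J p ω) - m‖ ^ 2 ∂μ ≤ (Fintype.card α : ℝ)⁻¹ * ∑ k, ‖ζ k‖ ^ 2 :=
    fun p => by
    simpa [← hmean p, integral_comp_of_uniform (hJ p) (hunif p) (fun k => ‖ζ k‖ ^ 2)] using
      integral_norm_sub_integral_sq_le (hL2 p)
  have hcard : (Fintype.card ι : ℝ) ≠ 0 := by positivity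
  have hcentre : ∀ ω, (Fintype.card ι : ℝ)⁻¹ • ∑ p, ζ (J p ω) - m =
      (Fintype.card ι : ℝ)⁻¹ • ∑ p, (ζ (J p ω) - m) := fun ω => by
    rw [Finset.sum_sub_distrib, smul_sub, Finset.sum_const, Finset.card_univ,
      ← Nat.cast_smul_eq_nsmul ℝ, smul_smul, inv_mul_cancel₀ hcard, one_smul]
  simp_rw [hcentre, norm_smul, mul_pow, Real.norm_eq_abs, sq_abs]
  rw [integral_const_mul, integral_norm_sum_sq_of_pairwise_indepFun hL2c
    (fun p q hpq => (hindep.indepFun hpq).comp (Measurable.of_discrete (f := fun k => ζ k - m))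
      (Measurable.of_discrete (f := fun k => ζ k - m))) hcentred]
  calc (Fintype.card ι : ℝ)⁻¹ ^ 2 * ∑ p, ∫ ω, ‖ζ (J p ω) - m‖ ^ 2 ∂μ
      ≤ (Fintype.card ι : ℝ)⁻¹ ^ 2 * ∑ _p : ι, (Fintype.card α : ℝ)⁻¹ * ∑ k, ‖ζ k‖ ^ 2 := by
        gcongr with p; exact hvar p
    _ = _ := by
        rw [Finset.sum_const, Finset.card_univ, nsmul_eq_mul]
        field_simp

theorem integral_norm_sq_minibatchMean_sub_mean_le {E : Type*} [NormedAddCommGroup E]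
    [InnerProductSpace ℝ E] [CompleteSpace E] [MeasurableSpace E] [BorelSpace E] (ζ : α → E)
    {N B : ℕ} [NeZero N] [NeZero B] {I : Fin N → Fin B → Ω → α}
    (hImeas : ∀ i a, Measurable (I i a))
    (hIindep : iIndepFun (fun p : Fin N × Fin B => I p.1 p.2) μ)
    (hIunif : ∀ i a k, μ {ω | I i a ω = k} = (Fintype.card α : ℝ≥0∞)⁻¹)
    {u : Fin N → Ω → E} (hu : ∀ i ω, u i ω = (B : ℝ)⁻¹ • ∑ a, ζ (I i a ω)) :
    ∫ ω, ‖(N : ℝ)⁻¹ • ∑ i, u i ω - (Fintype.card α : ℝ)⁻¹ • ∑ k, ζ k‖ ^ 2 ∂μ ≤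
      (N * B : ℝ)⁻¹ * ((Fintype.card α : ℝ)⁻¹ * ∑ k, ‖ζ k‖ ^ 2) := by
  have hflat : ∀ ω, (N : ℝ)⁻¹ • ∑ i, u i ω =
      (Fintype.card (Fin N × Fin B) : ℝ)⁻¹ • ∑ p : Fin N × Fin B, ζ (I p.1 p.2 ω) := fun ω => by
    simp only [hu, ← Finset.smul_sum, smul_smul, Fintype.sum_prod_type, Fintype.card_prod,
      Fintype.card_fin, Nat.cast_mul, mul_inv]
  simp_rw [hflat]
  simpa using integral_norm_sq_sampleMean_sub_mean_le ζ
    (J := fun p : Fin N × Fin B => I p.1 p.2) (fun p => hImeas p.1 p.2) hIindep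
    (fun p => hIunif p.1 p.2)

theorem integral_norm_sq_quantized_minibatchMean_sub_mean_le {E : Type*} [NormedAddCommGroup E]
    [InnerProductSpace ℝ E] [CompleteSpace E] [MeasurableSpace E] [BorelSpace E] (ζ : α → E)
    {N B : ℕ} (hN : 0 < N) (hB : 0 < B) {I : Fin N → Fin B → Ω → α}
    (hImeas : ∀ i a, Measurable (I i a))
    (hIindep : iIndepFun (fun p : Fin N × Fin B => I p.1 p.2) μ)
    (hIunif : ∀ i a k, μ {ω | I i a ω = k} = (Fintype.card α : ℝ≥0∞)⁻¹)
    {u : Fin N → Ω → E} (hu : ∀ i ω, u i ω = (B : ℝ)⁻¹ • ∑ a, ζ (I i a ω))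
    {Y : Fin N → Ω → E} (hYint : ∀ i, Integrable (fun ω => ‖Y i ω - u i ω‖ ^ 2) μ)
    {m : MeasurableSpace Ω} (hm : m ≤ mΩ) {κ : ℝ} (hκ : 0 ≤ κ)
    (hYcond : ∀ i, μ[fun ω => ‖Y i ω - u i ω‖ ^ 2 | m] ≤ᵐ[μ] fun ω => κ * ‖u i ω‖ ^ 2) :
    ∫ ω, ‖(N : ℝ)⁻¹ • ∑ i, Y i ω - (Fintype.card α : ℝ)⁻¹ • ∑ k, ζ k‖ ^ 2 ∂μ ≤
      2 * (κ + 1 / (N * B)) * ((Fintype.card α : ℝ)⁻¹ * ∑ k, ‖ζ k‖ ^ 2) := by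
  have : NeZero N := ⟨hN.ne'⟩
  have : NeZero B := ⟨hB.ne'⟩
  set V := (Fintype.card α : ℝ)⁻¹ * ∑ k, ‖ζ k‖ ^ 2
  set W := fun ω => (N : ℝ)⁻¹ • ∑ i, u i ω - (Fintype.card α : ℝ)⁻¹ • ∑ k, ζ k
  have hu' : ∀ i, u i = fun ω => (Fintype.card (Fin B) : ℝ)⁻¹ • ∑ a, ζ (I i a ω) := fun i =>
    funext fun ω => by simp [hu]
  have huL2 : ∀ i, MemLp (u i) 2 μ := fun i => hu' i ▸
    (memLp_finsetSum _ fun a _ => (MemLp.of_discrete (f := ζ)).comp_of_map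
      (hImeas i a).aemeasurable).const_smul _
  have hquant : ∀ i, ∫ ω, ‖Y i ω - u i ω‖ ^ 2 ∂μ ≤ κ * V := fun i =>
    (integral_le_integral_of_condExp_le hm
      (((memLp_two_iff_integrable_sq_norm (huL2 i).1).1 (huL2 i)).const_mul κ) (hYcond i)).trans
      (by
        rw [integral_const_mul, hu' i]
        exact mul_le_mul_of_nonneg_left
          (integral_norm_sq_sampleMean_le ζ (hImeas i) (hIunif i)) hκ)
  have hWL2 : MemLp W 2 μ :=
    ((memLp_finsetSum _ fun i _ => huL2 i).const_smul _).sub (memLp_const _)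
  have hYint' : Integrable (fun ω => (N : ℝ)⁻¹ * ∑ i, ‖Y i ω - u i ω‖ ^ 2) μ :=
    (integrable_finsetSum _ fun i _ => hYint i).const_mul _
  have hWint : Integrable (fun ω => ‖W ω‖ ^ 2) μ :=
    (memLp_two_iff_integrable_sq_norm hWL2.1).1 hWL2
  calc _ ≤ ∫ ω, 2 * ((N : ℝ)⁻¹ * ∑ i, ‖Y i ω - u i ω‖ ^ 2) + 2 * ‖W ω‖ ^ 2 ∂μ :=
        integral_mono_of_nonneg (.of_forall fun _ => by positivity)
          ((hYint'.const_mul 2).add (hWint.const_mul 2)) (.of_forall fun ω => by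
            simpa using norm_inv_card_smul_sum_sub_sq_le (Y · ω) (u · ω)
              ((Fintype.card α : ℝ)⁻¹ • ∑ k, ζ k))
    _ = 2 * ((N : ℝ)⁻¹ * ∑ i, ∫ ω, ‖Y i ω - u i ω‖ ^ 2 ∂μ) + 2 * ∫ ω, ‖W ω‖ ^ 2 ∂μ := by
        rw [integral_add (hYint'.const_mul 2) (hWint.const_mul 2), integral_const_mul,
          integral_const_mul, integral_const_mul, integral_finsetSum _ fun i _ => hYint i]
    _ ≤ 2 * ((N : ℝ)⁻¹ * ∑ _i : Fin N, κ * V) + 2 * ((N * B : ℝ)⁻¹ * V) := by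
        gcongr with i
        · exact hquant i
        · exact integral_norm_sq_minibatchMean_sub_mean_le ζ hImeas hIindep hIunif hu
    _ = 2 * (κ + 1 / (N * B)) * V := by
        simp only [Finset.sum_const, Finset.card_univ, Fintype.card_fin, nsmul_eq_mul]
        field_simp

end Sampling

end Probability

theorem lpc_svrg_variance_bound_convex_general
    {Ω : Type*} [MeasureSpace Ω] [IsProbabilityMeasure (ℙ : Measure Ω)]
    {d n N B : ℕ} (hN : 0 < N) (hB : 0 < B)
    (b dlam : ℕ) (lam : ℝ) (L : ℝ)
    (f : Fin n → EuclideanSpace ℝ (Fin d) → ℝ)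
    (g : Fin n → EuclideanSpace ℝ (Fin d) → EuclideanSpace ℝ (Fin d))
    (hgrad : ∀ j x, HasGradientAt (f j) (g j x) x)
    (hconv : ∀ j, ConvexOn ℝ Set.univ (f j))
    (hsmooth : ∀ j x y, ‖g j x - g j y‖ ≤ L * ‖x - y‖)
    (gF : EuclideanSpace ℝ (Fin d) → EuclideanSpace ℝ (Fin d))
    (hgF : ∀ x, HasGradientAt (fun y => (n : ℝ)⁻¹ * ∑ j, f j y) (gF x) x)
    (x xt : EuclideanSpace ℝ (Fin d))
    -- the mini-batch index samples of the `N` workers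
    (I : Fin N → Fin B → Ω → Fin n) (hImeas : ∀ i a, Measurable (I i a))
    (hIindep : iIndepFun (fun p : Fin N × Fin B => I p.1 p.2) ℙ)
    (hIunif : ∀ i a k, ℙ {ω | I i a ω = k} = (n : ℝ≥0∞)⁻¹)
    -- the variance-reduced local gradients
    (u : Fin N → Ω → EuclideanSpace ℝ (Fin d))
    (hu : ∀ i ω, u i ω = (B : ℝ)⁻¹ • ∑ a, (g (I i a ω) x - g (I i a ω) xt))
    -- the quantized gradients, with conditional mean-squared quantization error ≤ κ‖u_i‖²
    (Y : Fin N → Ω → EuclideanSpace ℝ (Fin d))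
    (hYint : ∀ i, Integrable fun ω => ‖Y i ω - u i ω‖ ^ 2)
    (hYcond : ∀ i, ∀ᵐ ω ∂ℙ,
      (ℙ[fun ω' => ‖Y i ω' - u i ω'‖ ^ 2 |
          ⨆ p : Fin N × Fin B, MeasurableSpace.comap (I p.1 p.2) inferInstance]) ω ≤
        ((d : ℝ) * lam ^ 2 / (4 * ((2 : ℝ) ^ (b - 1) - 1) ^ 2) +
            (dlam : ℝ) * (1 - lam) ^ 2) * ‖u i ω‖ ^ 2) :
    ∫ ω, ‖(N : ℝ)⁻¹ • ∑ i, Y i ω + gF xt - gF x‖ ^ 2 ≤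
      4 * L *
          ((d : ℝ) * lam ^ 2 / (4 * ((2 : ℝ) ^ (b - 1) - 1) ^ 2) +
            (dlam : ℝ) * (1 - lam) ^ 2 + 1 / ((N : ℝ) * (B : ℝ))) *
        ((n : ℝ)⁻¹ * ∑ j, f j xt - (n : ℝ)⁻¹ * ∑ j, f j x - ⟪gF x, xt - x⟫) := by
  set κ := (d : ℝ) * lam ^ 2 / (4 * ((2 : ℝ) ^ (b - 1) - 1) ^ 2) + (dlam : ℝ) * (1 - lam) ^ 2
  have hgF_eq : ∀ z, gF z = (n : ℝ)⁻¹ • ∑ j, g j z := fun z =>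
    (hgF z).unique (hasGradientAt_const_mul_sum (fun j => hgrad j z) _)
  have hmean : (Fintype.card (Fin n) : ℝ)⁻¹ • ∑ k, (g k x - g k xt) = gF x - gF xt := by
    rw [Fintype.card_fin, Finset.sum_sub_distrib, smul_sub, hgF_eq, hgF_eq]
  have hunif : ∀ i a k, ℙ {ω | I i a ω = k} = (Fintype.card (Fin n) : ℝ≥0∞)⁻¹ := by
    simpa using hIunif
  have hm : (⨆ p : Fin N × Fin B, MeasurableSpace.comap (I p.1 p.2) inferInstance) ≤
      (inferInstance : MeasurableSpace Ω) := iSup_le fun p => (hImeas p.1 p.2).comap_le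
  have hκ : 0 ≤ κ := by positivity
  have hvariance := integral_norm_sq_quantized_minibatchMean_sub_mean_le (μ := ℙ)
    (fun k => g k x - g k xt) hN hB hImeas hIindep hunif hu hYint hm hκ hYcond
  have hsmoothness := mean_norm_gradient_sub_sq_le hconv hgrad hsmooth x xt
  rw [hmean] at hvariance
  simp only [Fintype.card_fin, ← hgF_eq] at hvariance hsmoothness
  simp_rw [← sub_sub_eq_add_sub]
  calc _ ≤ _ := hvariance
    _ ≤ 2 * (κ + 1 / (N * B)) * (2 * L * ((n : ℝ)⁻¹ * ∑ j, f j xt - (n : ℝ)⁻¹ * ∑ j, f j x -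
          ⟪gF x, xt - x⟫)) := by gcongr
    _ = _ := by ring

/-- **Variance bound for the quantized distributed SVRG estimator, convex case (Lemma 9).**
Each of `N` workers computes a mini-batch variance-reduced gradient difference `u_i` from `B`
uniform independent indices and quantizes it into `Y_i` with conditional mean-squared error at
most `κ‖u_i‖²`, where `κ = dλ²/(4(2^{b-1}-1)²) + d_λ(1-λ)²`.  Then, with each `f j` convex, the
averaged estimator `v = (1/N)∑ Y_i + ∇f(x̃)` satisfies
`E‖v - ∇f(x)‖² ≤ 4L[dλ²/(4(2^{b-1}-1)²) + d_λ(1-λ)² + 1/(NB)][f(x̃) - f(x) - ⟨∇f(x), x̃ - x⟩]`. -/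
theorem lpc_svrg_variance_bound_convex
    {Ω : Type*} [MeasureSpace Ω] [IsProbabilityMeasure (ℙ : Measure Ω)]
    {d n N B : ℕ} (hn : 0 < n) (hN : 0 < N) (hB : 0 < B)
    (b dlam : ℕ) (hb : 2 ≤ b) (hdlam : dlam ≤ d)
    (lam : ℝ) (hlam : lam ∈ Set.Ioc (0 : ℝ) 1) (L : ℝ)
    (f : Fin n → EuclideanSpace ℝ (Fin d) → ℝ)
    (g : Fin n → EuclideanSpace ℝ (Fin d) → EuclideanSpace ℝ (Fin d))
    (hgrad : ∀ j x, HasGradientAt (f j) (g j x) x)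
    (hconv : ∀ j, ConvexOn ℝ Set.univ (f j))
    (hsmooth : ∀ j x y, ‖g j x - g j y‖ ≤ L * ‖x - y‖)
    (gF : EuclideanSpace ℝ (Fin d) → EuclideanSpace ℝ (Fin d))
    (hgF : ∀ x, HasGradientAt (fun y => (n : ℝ)⁻¹ * ∑ j, f j y) (gF x) x)
    (x xt : EuclideanSpace ℝ (Fin d))
    -- the mini-batch index samples of the `N` workers
    (I : Fin N → Fin B → Ω → Fin n) (hImeas : ∀ i a, Measurable (I i a))
    (hIindep : iIndepFun (fun p : Fin N × Fin B => I p.1 p.2) ℙ)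
    (hIunif : ∀ i a k, ℙ {ω | I i a ω = k} = (n : ℝ≥0∞)⁻¹)
    -- the variance-reduced local gradients
    (u : Fin N → Ω → EuclideanSpace ℝ (Fin d))
    (hu : ∀ i ω, u i ω = (B : ℝ)⁻¹ • ∑ a, (g (I i a ω) x - g (I i a ω) xt))
    -- the quantized gradients, with conditional mean-squared quantization error ≤ κ‖u_i‖²
    (Y : Fin N → Ω → EuclideanSpace ℝ (Fin d)) (hYmeas : ∀ i, Measurable (Y i))
    (hYint : ∀ i, Integrable fun ω => ‖Y i ω - u i ω‖ ^ 2)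
    (hYcond : ∀ i, ∀ᵐ ω ∂ℙ,
      (ℙ[fun ω' => ‖Y i ω' - u i ω'‖ ^ 2 |
          ⨆ p : Fin N × Fin B, MeasurableSpace.comap (I p.1 p.2) inferInstance]) ω ≤
        ((d : ℝ) * lam ^ 2 / (4 * ((2 : ℝ) ^ (b - 1) - 1) ^ 2) +
            (dlam : ℝ) * (1 - lam) ^ 2) * ‖u i ω‖ ^ 2) :
    ∫ ω, ‖(N : ℝ)⁻¹ • ∑ i, Y i ω + gF xt - gF x‖ ^ 2 ≤
      4 * L *
          ((d : ℝ) * lam ^ 2 / (4 * ((2 : ℝ) ^ (b - 1) - 1) ^ 2) +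
            (dlam : ℝ) * (1 - lam) ^ 2 + 1 / ((N : ℝ) * (B : ℝ))) *
        ((n : ℝ)⁻¹ * ∑ j, f j xt - (n : ℝ)⁻¹ * ∑ j, f j x - ⟪gF x, xt - x⟫) :=
  lpc_svrg_variance_bound_convex_general hN hB b dlam lam L f g hgrad hconv hsmooth gF hgF x xt I
    hImeas hIindep hIunif u hu Y hYint hYcond
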